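/- arXiv:1407.1093 — 2 statements merged into one kernel-verified Lean document; each statement's English description precedes it below -/
import Mathlib

section
/- Let O be a complete discrete valuation ring with maximal ideal m and residue field k, L its fraction field, and V a finite-dimensional L-vector space with a continuous action of a group G. Let T, T' ⊆ V be two G-stable O-lattices. If the residual representation T/mT is irreducible as a k[G]-module, then T/mT and T'/mT' are isomorphic as k[G]-modules. -/
/-!
Rescaling `T'` by a suitable `a ∈ Lˣ` gives a sublattice `a • T' ⊆ T` not contained in `m T`
(the exponent of the uniformizer in `a` is bounded by Krull's intersection theorem). Its image in
`T / m T` is a nonzero `G`-stable subspace, hence everything by irreducibility, and Nakayama gives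
`a • T' = T`. Thus `T ≅ T'` as `O[G]`-modules, and so are their reductions.
-/

open IsLocalRing

/-- The endomorphism of the residual representation `T ⧸ I•T` induced by an `O`-linear
endomorphism of `T`. -/
def residualMap {O T : Type*} [CommRing O] [AddCommGroup T] [Module O T]
    (I : Ideal O) (f : T →ₗ[O] T) :
    (T ⧸ (I • ⊤ : Submodule O T)) →ₗ[O] (T ⧸ (I • ⊤ : Submodule O T)) :=
  Submodule.mapQ _ _ f (by
    rw [← Submodule.map_le_iff_le_comap, Submodule.map_smul'']
    exact Submodule.smul_mono le_rfl le_top)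

lemma exists_residualEquiv_of_equiv {O M M' ι : Type*} [CommRing O] [AddCommGroup M]
    [Module O M] [AddCommGroup M'] [Module O M'] (I : Ideal O)
    (σ : ι → M →ₗ[O] M) (σ' : ι → M' →ₗ[O] M') (Φ : M ≃ₗ[O] M')
    (hΦ : ∀ g x, Φ (σ g x) = σ' g (Φ x)) :
    ∃ e : (M ⧸ (I • ⊤ : Submodule O M)) ≃ₗ[O] (M' ⧸ (I • ⊤ : Submodule O M')),
      ∀ g x, e (residualMap I (σ g) x) = residualMap I (σ' g) (e x) := by
  refine ⟨Submodule.Quotient.equiv _ _ Φ ?_, fun g x => ?_⟩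
  · rw [Submodule.map_smul'', Submodule.map_top, LinearEquiv.range]
  · induction x using Submodule.Quotient.induction_on with
    | H x => exact congrArg Submodule.Quotient.mk (hΦ g x)

theorem eq_top_of_residual_irreducible {O M ι : Type*} [CommRing O] [IsLocalRing O]
    [AddCommGroup M] [Module O M] [Module.Finite O M] (σ : ι → M →ₗ[O] M)
    (hirr : ∀ W : Submodule O (M ⧸ (maximalIdeal O • ⊤ : Submodule O M)),
      (∀ g, W.map (residualMap (maximalIdeal O) (σ g)) ≤ W) → W = ⊥ ∨ W = ⊤)
    {N : Submodule O M} (hN : ∀ g, N.map (σ g) ≤ N) (hNm : ¬ N ≤ maximalIdeal O • ⊤) :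
    N = ⊤ := by
  rw [← IsLocalRing.map_mkQ_eq_top]
  refine (hirr _ fun g => ?_).resolve_left fun hbot => hNm ?_
  · rw [← Submodule.map_comp, residualMap, Submodule.mapQ_mkQ, Submodule.map_comp]
    exact Submodule.map_mono (hN g)
  · rwa [← LinearMap.le_ker_iff_map, Submodule.ker_mkQ] at hbot

section Lattice

variable {O L V : Type*} [CommRing O] [IsDomain O] [Field L] [Algebra O L] [IsFractionRing O L]
  [AddCommGroup V] [Module L V] [Module O V] [IsScalarTower O L V]

lemma exists_smul_mem_of_span_eq_top {A : Submodule O V}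
    (hA : Submodule.span L (A : Set V) = ⊤) (v : V) : ∃ c : O, c ≠ 0 ∧ c • v ∈ A := by
  have hv : v ∈ Submodule.span L (A : Set V) := hA ▸ Submodule.mem_top
  obtain ⟨n, f, g, hfg⟩ := Submodule.mem_span_set'.mp hv
  obtain ⟨b, hb⟩ := IsLocalization.exist_integer_multiples (nonZeroDivisors O) Finset.univ f
  refine ⟨(b : O), nonZeroDivisors.ne_zero b.2, ?_⟩
  rw [← hfg, Finset.smul_sum]
  refine Submodule.sum_mem _ fun i _ => ?_
  obtain ⟨a, ha⟩ := hb i (Finset.mem_univ i)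
  rw [← smul_assoc, ← ha, algebraMap_smul]
  exact A.smul_mem _ (g i).2

lemma exists_smul_le_of_span_eq_top {A B : Submodule O V}
    (hA : Submodule.span L (A : Set V) = ⊤) (hB : B.FG) :
    ∃ c : O, c ≠ 0 ∧ ∀ x ∈ B, c • x ∈ A := by
  classical
  obtain ⟨s, rfl⟩ := hB
  choose c hc0 hc using exists_smul_mem_of_span_eq_top hA
  refine ⟨∏ v ∈ s, c v, Finset.prod_ne_zero_iff.mpr fun v _ => hc0 v, fun x hx => ?_⟩
  induction hx using Submodule.span_induction with
  | mem y hy =>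
      obtain ⟨d, hd⟩ := Finset.dvd_prod_of_mem c hy
      rw [hd, mul_comm, mul_smul]
      exact A.smul_mem d (hc y)
  | zero => rw [smul_zero]; exact A.zero_mem
  | add y z _ _ hy hz => rw [smul_add]; exact A.add_mem hy hz
  | smul o y _ hy => rw [smul_comm]; exact A.smul_mem o hy

variable [IsDiscreteValuationRing O]

lemma exists_smul_mem_not_mem_maximalIdeal_smul {T T' : Submodule O V} (hT : T.FG)
    (hT' : T'.FG) (hspan : Submodule.span L (T : Set V) = ⊤) (hne : T' ≠ ⊥) :
    ∃ a : L, a ≠ 0 ∧ (∀ x ∈ T', a • x ∈ T) ∧ ∃ x ∈ T', a • x ∉ maximalIdeal O • T := by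
  obtain ⟨π, hπ⟩ := IsDiscreteValuationRing.exists_irreducible O
  obtain ⟨c, hc0, hc⟩ := exists_smul_le_of_span_eq_top hspan hT'
  have hinj := IsFractionRing.injective O L
  have hcL : algebraMap O L c ≠ 0 := (map_ne_zero_iff _ hinj).mpr hc0
  have hπL : algebraMap O L π ≠ 0 := (map_ne_zero_iff _ hinj).mpr hπ.ne_zero
  have hπm : π ∈ maximalIdeal O := hπ.maximalIdeal_eq ▸ Ideal.mem_span_singleton_self π
  let b (k : ℕ) : L := algebraMap O L c / algebraMap O L π ^ k
  have hb (k j : ℕ) (x : V) : π ^ j • b (k + j) • x = b k • x := by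
    rw [← algebraMap_smul L, smul_smul, map_pow]
    congr 1
    simp only [b, pow_add]
    field_simp
  have hb0 (x : V) : b 0 • x = c • x := by simp [b, algebraMap_smul]
  -- Otherwise `c • x ≠ 0` lies in every `m ^ n • T`, contradicting Krull's intersection theorem.
  have hfail : ∃ n, ¬ ∀ x ∈ T', b n • x ∈ T := by
    by_contra! h
    obtain ⟨x, hx, hx0⟩ := T'.ne_bot_iff.mp hne
    have : Module.Finite O T := Module.Finite.iff_fg.mpr hT
    have hcx : (⟨c • x, hc x hx⟩ : T) = 0 := IsHausdorff.haus (I := maximalIdeal O)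
      inferInstance _ fun n => SModEq.zero.mpr <| by
        convert Submodule.smul_mem_smul (Ideal.pow_mem_pow hπm n)
          (Submodule.mem_top (x := (⟨b n • x, h n x hx⟩ : T)))
        rw [SetLike.val_smul, ← hb0, ← hb 0 n x, zero_add]
    rw [Submodule.mk_eq_zero, ← algebraMap_smul L] at hcx
    exact smul_ne_zero hcL hx0 hcx
  classical
  -- For the least failing `n = k + 1`, `a = b k` works: `b k • T' ⊆ π • T` would make `n` succeed.
  have hpos : Nat.find hfail ≠ 0 := fun h0 =>
    Nat.find_spec hfail (h0 ▸ fun x hx => (hb0 x).symm ▸ hc x hx)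
  obtain ⟨k, hk⟩ := Nat.exists_eq_succ_of_ne_zero hpos
  refine ⟨b k, div_ne_zero hcL (pow_ne_zero _ hπL),
    by_contra fun h => Nat.find_min hfail (hk ▸ k.lt_succ_self) h, ?_⟩
  by_contra! h
  refine Nat.find_spec hfail (hk ▸ fun x hx => ?_)
  obtain ⟨t, ht, hπt⟩ : ∃ t ∈ T, π • t = b k • x := by
    rw [← Submodule.mem_smul_pointwise_iff_exists, ← Submodule.ideal_span_singleton_smul,
      ← hπ.maximalIdeal_eq]
    exact h x hx
  rw [← hb k 1 x, pow_one, ← algebraMap_smul L, ← algebraMap_smul L π] at hπt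
  rwa [← smul_right_injective V hπL hπt]

theorem exists_equivariant_equiv_of_residual_irreducible {ι : Type*} (ρ : ι → V →ₗ[L] V)
    {T T' : Submodule O V} (hT : T.FG) (hT' : T'.FG)
    (hspan : Submodule.span L (T : Set V) = ⊤) (hne : T' ≠ ⊥)
    (σ : ι → T →ₗ[O] T) (σ' : ι → T' →ₗ[O] T')
    (hσ : ∀ g (x : T), (σ g x : V) = ρ g x) (hσ' : ∀ g (x : T'), (σ' g x : V) = ρ g x)
    (hirr : ∀ W : Submodule O (T ⧸ (maximalIdeal O • ⊤ : Submodule O T)),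
      (∀ g, W.map (residualMap (maximalIdeal O) (σ g)) ≤ W) → W = ⊥ ∨ W = ⊤) :
    ∃ Φ : T ≃ₗ[O] T', ∀ g x, Φ (σ g x) = σ' g (Φ x) := by
  obtain ⟨a, ha, haT, x₀, hx₀, hx₀m⟩ :=
    exists_smul_mem_not_mem_maximalIdeal_smul hT hT' hspan hne
  let θ : V ≃ₗ[O] V := (LinearEquiv.smulOfNeZero L V a ha).restrictScalars O
  have : Module.Finite O T := Module.Finite.iff_fg.mpr hT
  have hU : (T'.map θ.toLinearMap).comap T.subtype = ⊤ := by
    refine eq_top_of_residual_irreducible σ hirr (fun g => ?_) fun h => hx₀m ?_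
    · rintro _ ⟨t, ⟨y, hy, hyt⟩, rfl⟩
      refine ⟨ρ g y, hσ' g ⟨y, hy⟩ ▸ (σ' g ⟨y, hy⟩).2, ?_⟩
      change a • ρ g y = (σ g t : V)
      rw [hσ, ← show a • y = (t : V) from hyt, map_smul]
    · exact (Submodule.mem_smul_top_iff _ _ _).mp (h (x := ⟨a • x₀, haT _ hx₀⟩) ⟨x₀, hx₀, rfl⟩)
  have hUT : T'.map θ.toLinearMap = T :=
    le_antisymm (Submodule.map_le_iff_le_comap.mpr haT) fun t ht =>
      (Submodule.eq_top_iff'.mp hU ⟨t, ht⟩ : _)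
  let Φ : T' ≃ₗ[O] T := (θ.submoduleMap T').trans (LinearEquiv.ofEq _ _ hUT)
  have hΦ (y : T') : (Φ y : V) = a • (y : V) := rfl
  refine ⟨Φ.symm, fun g x => ?_⟩
  obtain ⟨y, rfl⟩ := Φ.surjective x
  rw [Φ.symm_apply_apply, Φ.symm_apply_eq]
  ext
  rw [hσ, hΦ, hΦ, hσ', map_smul]

end Lattice

theorem statement0_general
    {O : Type*} [CommRing O] [IsDomain O] [IsDiscreteValuationRing O]
    {L : Type*} [Field L] [Algebra O L] [IsFractionRing O L]
    {V : Type*} [AddCommGroup V] [Module L V] [Module O V] [IsScalarTower O L V]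
    {G : Type*} [Group G] (ρ : G →* (V →ₗ[L] V))
    (T T' : Submodule O V) (hTfg : T.FG) (hT'fg : T'.FG)
    (hTspan : Submodule.span L (T : Set V) = ⊤)
    (hT'span : Submodule.span L (T' : Set V) = ⊤)
    (σ : G → (T →ₗ[O] T)) (σ' : G → (T' →ₗ[O] T'))
    (hσ : ∀ g (x : T), ((σ g x : V)) = ρ g (x : V))
    (hσ' : ∀ g (x : T'), ((σ' g x : V)) = ρ g (x : V))
    (hirr : ∀ W : Submodule O (T ⧸ (maximalIdeal O • ⊤ : Submodule O T)),
      (∀ g, W.map (residualMap (maximalIdeal O) (σ g)) ≤ W) → W = ⊥ ∨ W = ⊤) :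
    ∃ e : (T ⧸ (maximalIdeal O • ⊤ : Submodule O T)) ≃ₗ[O]
        (T' ⧸ (maximalIdeal O • ⊤ : Submodule O T')),
      ∀ g x, e (residualMap (maximalIdeal O) (σ g) x) =
        residualMap (maximalIdeal O) (σ' g) (e x) := by
  rcases subsingleton_or_nontrivial V with hV | hV
  · exact ⟨LinearEquiv.ofSubsingleton _ _, fun _ _ => Subsingleton.elim _ _⟩
  have hne : T' ≠ ⊥ := by rintro rfl; simp at hT'span
  obtain ⟨Φ, hΦ⟩ := exists_equivariant_equiv_of_residual_irreducible (fun g => ρ g)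
    hTfg hT'fg hTspan hne σ σ' hσ hσ' hirr
  exact exists_residualEquiv_of_equiv _ σ σ' Φ hΦ

/-- Let `O` be a complete discrete valuation ring with maximal ideal `m`
and residue field `k`, `L` its fraction field, and `V` a finite-dimensional `L`-vector
space with an action of a group `G` (given by `ρ`). Let `T, T' ⊆ V` be two `G`-stable
`O`-lattices (finitely generated `O`-submodules spanning `V` over `L` and preserved by
`G`; the `G`-actions on `T, T'` are recorded by `σ, σ'`). If the residual representation
`T/mT` is irreducible as a `k[G]`-module (no nontrivial proper `G`-stable submodules),
then `T/mT` and `T'/mT'` are isomorphic as `k[G]`-modules (an `O`-linear — equivalently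
`k`-linear, as `m` acts by zero — equivalence commuting with the `G`-actions). -/
theorem statement0
    {O : Type*} [CommRing O] [IsDomain O] [IsDiscreteValuationRing O]
    [IsAdicComplete (maximalIdeal O) O]
    {L : Type*} [Field L] [Algebra O L] [IsFractionRing O L]
    {V : Type*} [AddCommGroup V] [Module L V] [Module O V] [IsScalarTower O L V]
    [FiniteDimensional L V]
    {G : Type*} [Group G] (ρ : G →* (V →ₗ[L] V))
    (T T' : Submodule O V) (hTfg : T.FG) (hT'fg : T'.FG)
    (hTspan : Submodule.span L (T : Set V) = ⊤)
    (hT'span : Submodule.span L (T' : Set V) = ⊤)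
    (σ : G → (T →ₗ[O] T)) (σ' : G → (T' →ₗ[O] T'))
    (hσ : ∀ g (x : T), ((σ g x : V)) = ρ g (x : V))
    (hσ' : ∀ g (x : T'), ((σ' g x : V)) = ρ g (x : V))
    (hirr : ∀ W : Submodule O (T ⧸ (maximalIdeal O • ⊤ : Submodule O T)),
      (∀ g, W.map (residualMap (maximalIdeal O) (σ g)) ≤ W) → W = ⊥ ∨ W = ⊤) :
    ∃ e : (T ⧸ (maximalIdeal O • ⊤ : Submodule O T)) ≃ₗ[O]
        (T' ⧸ (maximalIdeal O • ⊤ : Submodule O T')),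
      ∀ g x, e (residualMap (maximalIdeal O) (σ g) x) =
        residualMap (maximalIdeal O) (σ' g) (e x) :=
  statement0_general ρ T T' hTfg hT'fg hTspan hT'span σ σ' hσ hσ' hirr
end

section
/- Let O be a complete discrete valuation ring with maximal ideal m and fraction field L, V a finite-dimensional L-vector space with an action of a group G, and T, T' ⊆ V two G-stable O-lattices. If T/mT is irreducible as a module over the residue field group algebra, then there exists a ∈ L× with T = aT'. -/
/-!
Pick a uniformiser `π` and scale `T'` by some `a ∈ L×` so that `aT' ⊆ T` but `aT' ⊄ πT`.
Such an `a` exists: some `c ∈ O` puts `cT'` inside `T`, and `cπ⁻ⁿT' ⊆ T` cannot hold for all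
`n`, since with `dT ⊆ T'` it makes `dcπ⁻ⁿ` integral over `O`, i.e. `πⁿ ∣ dc`.
The image of `aT'` in `T/πT` is then a nonzero `G`-stable subspace, hence everything by
irreducibility, and Nakayama's lemma gives `aT' = T`.
-/

open IsLocalRing

theorem map_residualMap_map_mkQ {O M : Type*} [CommRing O] [AddCommGroup M] [Module O M]
    (I : Ideal O) (f : M →ₗ[O] M) (S : Submodule O M) :
    (S.map (I • ⊤ : Submodule O M).mkQ).map (residualMap I f) =
      (S.map f).map (I • ⊤ : Submodule O M).mkQ := by
  rw [← Submodule.map_comp, ← Submodule.map_comp, residualMap, Submodule.mapQ_mkQ]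

theorem eq_top_of_invariant_of_not_le_smul_top {O M G : Type*} [CommRing O] [IsLocalRing O]
    [AddCommGroup M] [Module O M] [Module.Finite O M] (σ : G → M →ₗ[O] M)
    (hirr : ∀ W : Submodule O (M ⧸ (maximalIdeal O • ⊤ : Submodule O M)),
      (∀ g, W.map (residualMap (maximalIdeal O) (σ g)) ≤ W) → W = ⊥ ∨ W = ⊤)
    {S : Submodule O M} (hS : ∀ g, S.map (σ g) ≤ S) (hSm : ¬S ≤ maximalIdeal O • ⊤) :
    S = ⊤ := by
  rw [← map_mkQ_eq_top]
  refine (hirr _ fun g => ?_).resolve_left ?_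
  · rw [map_residualMap_map_mkQ]
    exact Submodule.map_mono (hS g)
  · rwa [← LinearMap.le_ker_iff_map, Submodule.ker_mkQ]

section Lattice

variable {O : Type*} [CommRing O] {L : Type*} [Field L] [Algebra O L]
  {V : Type*} [AddCommGroup V] [Module L V] [Module O V]
  [IsScalarTower O L V]

theorem exists_smul_mem_of_fg_of_span_eq_top [IsDomain O] [IsFractionRing O L]
    {T T' : Submodule O V} (hT'fg : T'.FG)
    (hTspan : Submodule.span L (T : Set V) = ⊤) :
    ∃ c : O, c ≠ 0 ∧ ∀ x ∈ T', algebraMap O L c • x ∈ T := by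
  have exists_scale : ∀ v : V, ∃ c : O, c ≠ 0 ∧ algebraMap O L c • v ∈ T := by
    intro v
    obtain ⟨n, f, g, rfl⟩ := Submodule.mem_span_set'.mp (hTspan ▸ Submodule.mem_top (x := v))
    obtain ⟨b, hb⟩ := IsLocalization.exist_integer_multiples (nonZeroDivisors O) Finset.univ f
    refine ⟨b, nonZeroDivisors.coe_ne_zero b, ?_⟩
    rw [Finset.smul_sum]
    refine Submodule.sum_mem _ fun i _ => ?_
    obtain ⟨o, ho⟩ := hb i (Finset.mem_univ i)
    rw [smul_smul, ← Algebra.smul_def, ← ho, algebraMap_smul]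
    exact T.smul_mem o (g i).2
  choose c hc0 hcT using exists_scale
  obtain ⟨s, rfl⟩ := hT'fg
  classical
  refine ⟨∏ v ∈ s, c v, Finset.prod_ne_zero_iff.mpr fun v _ => hc0 v, fun x hx => ?_⟩
  induction hx using Submodule.span_induction with
  | mem v hv =>
    rw [← Finset.mul_prod_erase s c hv, mul_comm, map_mul, mul_smul, algebraMap_smul]
    exact T.smul_mem _ (hcT v)
  | zero => simp
  | add _ _ _ _ hx hy => rw [smul_add]; exact T.add_mem hx hy
  | smul r _ _ hx => rw [smul_comm]; exact T.smul_mem r hx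

theorem exists_algebraMap_eq_mul_of_smul_mem [IsDomain O] [IsFractionRing O L]
    [IsIntegrallyClosed O] {T T' : Submodule O V} (hT'fg : T'.FG) (hT' : T' ≠ ⊥) {d : O}
    (hd : ∀ x ∈ T, algebraMap O L d • x ∈ T') {a : L} (ha : ∀ x ∈ T', a • x ∈ T) :
    ∃ o : O, algebraMap O L o = algebraMap O L d * a :=
  IsIntegrallyClosed.isIntegral_iff.mp <|
    isIntegral_of_smul_mem_submodule T' hT' hT'fg _ fun x hx => by
      rw [mul_smul]
      exact hd _ (ha x hx)

theorem exists_smul_mem_and_not_smul_mem [IsDomain O] [IsFractionRing O L]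
    [IsIntegrallyClosed O] [WfDvdMonoid O] {T T' : Submodule O V} (hTfg : T.FG) (hT'fg : T'.FG)
    (hT' : T' ≠ ⊥) (hTspan : Submodule.span L (T : Set V) = ⊤)
    (hT'span : Submodule.span L (T' : Set V) = ⊤) {π : O} (hπ : Irreducible π) :
    ∃ a : L, a ≠ 0 ∧ (∀ x ∈ T', a • x ∈ T) ∧
      ∃ y ∈ T', (a * (algebraMap O L π)⁻¹) • y ∉ T := by
  obtain ⟨c, hc0, hcT⟩ := exists_smul_mem_of_fg_of_span_eq_top hT'fg hTspan
  obtain ⟨d, hd0, hdT⟩ := exists_smul_mem_of_fg_of_span_eq_top hTfg hT'span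
  have hinj := IsFractionRing.injective O L
  have hπ0 : algebraMap O L π ≠ 0 := (map_ne_zero_iff _ hinj).mpr hπ.ne_zero
  let P (n : ℕ) : Prop :=
    ∀ x ∈ T', (algebraMap O L c * (algebraMap O L π ^ n)⁻¹) • x ∈ T
  have hP0 : P 0 := by simpa [P] using hcT
  have hP_bdd : ∃ n, ¬P n := by
    obtain ⟨n, hn⟩ := FiniteMultiplicity.of_not_isUnit hπ.not_isUnit (mul_ne_zero hd0 hc0)
    refine ⟨n + 1, fun hP => hn ?_⟩
    obtain ⟨o, ho⟩ := exists_algebraMap_eq_mul_of_smul_mem hT'fg hT' hdT hP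
    refine ⟨o, hinj ?_⟩
    rw [map_mul, map_mul, map_pow, ho]
    field_simp
  obtain ⟨n, hn, hn1⟩ : ∃ n, P n ∧ ¬P (n + 1) := by
    by_contra! h
    obtain ⟨m, hm⟩ := hP_bdd
    exact hm (Nat.rec hP0 h m)
  refine ⟨_, ?_, hn, ?_⟩
  · exact mul_ne_zero ((map_ne_zero_iff _ hinj).mpr hc0) (inv_ne_zero (pow_ne_zero n hπ0))
  · simpa [P, pow_succ', mul_assoc] using hn1

theorem inv_smul_mem_of_mem_span_singleton_smul_top [IsFractionRing O L] {T : Submodule O V}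
    {π : O} (hπ : π ≠ 0) {x : T} (hx : x ∈ Ideal.span {π} • (⊤ : Submodule O T)) :
    (algebraMap O L π)⁻¹ • (x : V) ∈ T := by
  rw [Submodule.mem_smul_top_iff, Submodule.ideal_span_singleton_smul,
    Submodule.mem_smul_pointwise_iff_exists] at hx
  obtain ⟨t, ht, hxt⟩ := hx
  rwa [← hxt, ← algebraMap_smul L π t, smul_smul, inv_mul_cancel₀
    ((map_ne_zero_iff _ (IsFractionRing.injective O L)).mpr hπ), one_smul]

theorem map_comap_subtype_map_lsmul_le {T T' : Submodule O V} (ρ : V →ₗ[L] V)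
    {f : T →ₗ[O] T} {f' : T' →ₗ[O] T'} (hf : ∀ x : T, (f x : V) = ρ x)
    (hf' : ∀ x : T', (f' x : V) = ρ x) (a : L) :
    ((T'.map ((LinearMap.lsmul L V a).restrictScalars O)).comap T.subtype).map f ≤
      (T'.map ((LinearMap.lsmul L V a).restrictScalars O)).comap T.subtype := by
  rintro _ ⟨x, ⟨y, hy, hyx⟩, rfl⟩
  refine ⟨f' ⟨y, hy⟩, (f' ⟨y, hy⟩).2, ?_⟩
  simp only [LinearMap.restrictScalars_apply, LinearMap.lsmul_apply,
    Submodule.subtype_apply] at hyx ⊢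
  rw [hf', hf, ← map_smul, hyx]

end Lattice

theorem statement1_general
    {O : Type*} [CommRing O] [IsDomain O] [IsDiscreteValuationRing O]
    {L : Type*} [Field L] [Algebra O L] [IsFractionRing O L]
    {V : Type*} [AddCommGroup V] [Module L V] [Module O V] [IsScalarTower O L V]
    {G : Type*} [Group G] (ρ : G →* (V →ₗ[L] V))
    (T T' : Submodule O V) (hTfg : T.FG) (hT'fg : T'.FG)
    (hTspan : Submodule.span L (T : Set V) = ⊤)
    (hT'span : Submodule.span L (T' : Set V) = ⊤)
    (σ : G → (T →ₗ[O] T)) (σ' : G → (T' →ₗ[O] T'))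
    (hσ : ∀ g (x : T), ((σ g x : V)) = ρ g (x : V))
    (hσ' : ∀ g (x : T'), ((σ' g x : V)) = ρ g (x : V))
    (hirr : ∀ W : Submodule O (T ⧸ (maximalIdeal O • ⊤ : Submodule O T)),
      (∀ g, W.map (residualMap (maximalIdeal O) (σ g)) ≤ W) → W = ⊥ ∨ W = ⊤) :
    ∃ a : L, a ≠ 0 ∧
      T = Submodule.map (((LinearMap.lsmul L V a)).restrictScalars O) T' := by
  rcases subsingleton_or_nontrivial V with hV | hV
  · exact ⟨1, one_ne_zero, Subsingleton.elim _ _⟩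
  have hT' : T' ≠ ⊥ := by
    rintro rfl
    simp at hT'span
  obtain ⟨π, hπ⟩ := IsDiscreteValuationRing.exists_irreducible O
  obtain ⟨a, ha0, haT, y, hy, hyπ⟩ :=
    exists_smul_mem_and_not_smul_mem hTfg hT'fg hT' hTspan hT'span hπ
  let S : Submodule O T :=
    (T'.map ((LinearMap.lsmul L V a).restrictScalars O)).comap T.subtype
  have hS_stable : ∀ g, S.map (σ g) ≤ S := fun g =>
    map_comap_subtype_map_lsmul_le (ρ g) (hσ g) (hσ' g) a
  have hS_not_le : ¬S ≤ maximalIdeal O • ⊤ := fun hle => hyπ <| by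
    have hay := hle (x := ⟨a • y, haT y hy⟩) ⟨y, hy, rfl⟩
    rw [hπ.maximalIdeal_eq] at hay
    rw [mul_comm, mul_smul]
    exact inv_smul_mem_of_mem_span_singleton_smul_top hπ.ne_zero hay
  have : Module.Finite O T := Module.Finite.iff_fg.mpr hTfg
  have hS : S = ⊤ := eq_top_of_invariant_of_not_le_smul_top σ hirr hS_stable hS_not_le
  exact ⟨a, ha0, le_antisymm (Submodule.comap_subtype_eq_top.mp hS)
    (Submodule.map_le_iff_le_comap.mpr haT)⟩

/-- Let `O` be a complete discrete valuation ring with maximal ideal `m`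
and fraction field `L`, `V` a finite-dimensional `L`-vector space with an action of a
group `G` (given by `ρ`), and `T, T' ⊆ V` two `G`-stable `O`-lattices (with `G`-actions
recorded by `σ, σ'`). If `T/mT` is irreducible as a module over the residue field group
algebra `k[G]`, then there exists `a ∈ L^×` with `T = a • T'`. -/
theorem statement1
    {O : Type*} [CommRing O] [IsDomain O] [IsDiscreteValuationRing O]
    [IsAdicComplete (maximalIdeal O) O]
    {L : Type*} [Field L] [Algebra O L] [IsFractionRing O L]
    {V : Type*} [AddCommGroup V] [Module L V] [Module O V] [IsScalarTower O L V]
    [FiniteDimensional L V]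
    {G : Type*} [Group G] (ρ : G →* (V →ₗ[L] V))
    (T T' : Submodule O V) (hTfg : T.FG) (hT'fg : T'.FG)
    (hTspan : Submodule.span L (T : Set V) = ⊤)
    (hT'span : Submodule.span L (T' : Set V) = ⊤)
    (σ : G → (T →ₗ[O] T)) (σ' : G → (T' →ₗ[O] T'))
    (hσ : ∀ g (x : T), ((σ g x : V)) = ρ g (x : V))
    (hσ' : ∀ g (x : T'), ((σ' g x : V)) = ρ g (x : V))
    (hirr : ∀ W : Submodule O (T ⧸ (maximalIdeal O • ⊤ : Submodule O T)),
      (∀ g, W.map (residualMap (maximalIdeal O) (σ g)) ≤ W) → W = ⊥ ∨ W = ⊤) :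
    ∃ a : L, a ≠ 0 ∧
      T = Submodule.map (((LinearMap.lsmul L V a)).restrictScalars O) T' :=
  statement1_general ρ T T' hTfg hT'fg hTspan hT'span σ σ' hσ hσ' hirr
end
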